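/- arXiv:1509.01679 — 2 statements merged into one kernel-verified Lean document; each statement's English description precedes it below -/
import Mathlib

section
/- Let n ≥ 1 and let e be a random vector uniformly distributed on the unit Euclidean sphere S₂ⁿ(1) ⊂ ℝⁿ. Then for every real q with 2 ≤ q ≤ 2·ln n one has E[‖e‖_q²] ≤ (q − 1)·n^{2/q − 1}. -/
open MeasureTheory Metric

/-- A probability measure on `ℝⁿ` which is carried by the unit Euclidean sphere and is
invariant under all linear isometries: the (unique) uniform distribution on the sphere. -/
def IsUniformOnSphere {n : ℕ} (σ : Measure (EuclideanSpace ℝ (Fin n))) : Prop :=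
  IsProbabilityMeasure σ ∧
    σ (Metric.sphere (0 : EuclideanSpace ℝ (Fin n)) 1)ᶜ = 0 ∧
    ∀ T : EuclideanSpace ℝ (Fin n) ≃ₗᵢ[ℝ] EuclideanSpace ℝ (Fin n), σ.map T = σ

/-- The `ℓ_q` norm `(∑ᵢ |xᵢ|^q)^{1/q}` on `ℝⁿ` (for a real exponent `q`). -/
noncomputable def lqNorm {n : ℕ} (q : ℝ) (x : EuclideanSpace ℝ (Fin n)) : ℝ :=
  (∑ i, |x i| ^ q) ^ (1 / q)

/-!
Write `m_k = E[e_i^{2k}]`. Invariance of `σ` under an isometry acting on coordinate `i` as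
`e ↦ cos θ e_i + sin θ e_j` expresses `m_{K+1}` as a polynomial in `t = cos² θ` whose odd
terms vanish (by a reflection); dividing by `1 - t` and letting `t → 1` gives
`m_{K+1} = (2K+1) E[e_i^{2K} e_j^2]`. Averaging against `∑ₖ e_k² = 1` turns this into the
recursion `(n + 2K) m_{K+1} = (2K+1) m_K`, so `m_k ≤ ((2k-1)/n)^k`. Hölder interpolation
between the orders `2k ≤ q < 2k+2` and weighted AM-GM give `E|e_i|^q ≤ ((q-1)/n)^{q/2}`, and
Jensen for the concave map `y ↦ y^{2/q}` yields
`E‖e‖_q² ≤ (n ((q-1)/n)^{q/2})^{2/q} = (q-1) n^{2/q-1}`.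
-/

theorem integral_rpow_mul_rpow_le {α : Type*} [MeasurableSpace α] {μ : Measure α}
    {f g : α → ℝ} (hf : 0 ≤ᵐ[μ] f) (hg : 0 ≤ᵐ[μ] g) (hfi : Integrable f μ)
    (hgi : Integrable g μ) {p q : ℝ} (hp : 0 ≤ p) (hq : 0 ≤ q) (hpq : p + q = 1) :
    ∫ a, f a ^ p * g a ^ q ∂μ ≤ (∫ a, f a ∂μ) ^ p * (∫ a, g a ∂μ) ^ q := by
  have hofReal : ∀ᵐ a ∂μ, ENNReal.ofReal (f a ^ p * g a ^ q)
      = ENNReal.ofReal (f a) ^ p * ENNReal.ofReal (g a) ^ q := by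
    filter_upwards [hf, hg] with a ha hb
    rw [ENNReal.ofReal_mul (Real.rpow_nonneg ha p), ENNReal.ofReal_rpow_of_nonneg ha hp,
      ENNReal.ofReal_rpow_of_nonneg hb hq]
  have hnonneg : 0 ≤ᵐ[μ] fun a => f a ^ p * g a ^ q := by
    filter_upwards [hf, hg] with a ha hb
    exact mul_nonneg (Real.rpow_nonneg ha p) (Real.rpow_nonneg hb q)
  have hmeas : AEStronglyMeasurable (fun a => f a ^ p * g a ^ q) μ :=
    ((hfi.aemeasurable.pow_const p).mul (hgi.aemeasurable.pow_const q)).aestronglyMeasurable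
  have hholder := ENNReal.lintegral_mul_norm_pow_le hfi.aemeasurable.ennreal_ofReal
    hgi.aemeasurable.ennreal_ofReal hp hq hpq
  rw [integral_eq_lintegral_of_nonneg_ae hf hfi.aestronglyMeasurable,
    integral_eq_lintegral_of_nonneg_ae hg hgi.aestronglyMeasurable,
    integral_eq_lintegral_of_nonneg_ae hnonneg hmeas,
    lintegral_congr_ae hofReal, ENNReal.toReal_rpow, ENNReal.toReal_rpow,
    ← ENNReal.toReal_mul]
  exact ENNReal.toReal_mono (ENNReal.mul_ne_top
    (ENNReal.rpow_ne_top_of_nonneg hp hfi.lintegral_lt_top.ne)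
    (ENNReal.rpow_ne_top_of_nonneg hq hgi.lintegral_lt_top.ne)) hholder

theorem rpow_mul_rpow_le_rpow_weighted_mean {a b r u : ℝ} (ha : 0 ≤ a) (hab : a ≤ b)
    (hr : 1 ≤ r) (hu₀ : 0 ≤ u) (hu₁ : u ≤ 1) :
    a ^ r * b ^ u ≤ ((1 - u) * a + u * b) ^ (r + u) := by
  have hb : 0 ≤ b := ha.trans hab
  have ha_le : a ≤ (1 - u) * a + u * b := by nlinarith
  have hamgm : a ^ (1 - u) * b ^ u ≤ (1 - u) * a + u * b :=
    Real.geom_mean_le_arith_mean2_weighted (by linarith) hu₀ ha hb (by ring)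
  calc a ^ r * b ^ u = a ^ (r - 1 + u) * (a ^ (1 - u) * b ^ u) := by
        rw [← mul_assoc, ← Real.rpow_add' ha (by linarith)]
        ring_nf
    _ ≤ ((1 - u) * a + u * b) ^ (r - 1 + u) * ((1 - u) * a + u * b) := by
        gcongr
    _ = ((1 - u) * a + u * b) ^ (r + u) := by
        rw [← Real.rpow_add_one' (ha.trans ha_le) (by linarith)]
        ring_nf

theorem Finset.sum_range_two_mul_add_one_of_odd_eq_zero {M : Type*} [AddCommMonoid M]
    (f : ℕ → M) (hf : ∀ l, Odd l → f l = 0) (N : ℕ) :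
    ∑ l ∈ Finset.range (2 * N + 1), f l = ∑ p ∈ Finset.range (N + 1), f (2 * p) := by
  induction N with
  | zero => simp
  | succ N ih =>
    rw [show 2 * (N + 1) + 1 = 2 * N + 1 + 1 + 1 by ring, Finset.sum_range_succ,
      Finset.sum_range_succ, ih, hf _ (odd_two_mul_add_one N), add_zero,
      Finset.sum_range_succ _ (N + 1), mul_add_one]

open EuclideanSpace Real in
theorem EuclideanSpace.exists_linearIsometryEquiv_apply_eq_cos_sin {ι : Type*} [Fintype ι]
    [DecidableEq ι] {i j : ι} (hij : i ≠ j) (θ : ℝ) :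
    ∃ T : EuclideanSpace ℝ ι ≃ₗᵢ[ℝ] EuclideanSpace ℝ ι, ∀ x,
      T x i = cos θ * x i + sin θ * x j ∧ T x j = sin θ * x i - cos θ * x j := by
  set v := single i (cos (θ / 2)) + single j (sin (θ / 2))
  have hv : ‖v‖ = 1 := by
    rw [norm_eq_sqrt_real_inner, Real.sqrt_eq_one, inner_add_left, inner_single_left,
      inner_single_left]
    simp [v, hij, hij.symm, ← sq, cos_sq_add_sin_sq]
  have hcos : cos θ = 2 * cos (θ / 2) ^ 2 - 1 := by
    rw [← cos_two_mul, mul_div_cancel₀ _ two_ne_zero]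
  have hsin : sin θ = 2 * sin (θ / 2) * cos (θ / 2) := by
    rw [← sin_two_mul, mul_div_cancel₀ _ two_ne_zero]
  refine ⟨(ℝ ∙ v).reflection, fun x => ?_⟩
  rw [Submodule.reflection_apply, Submodule.starProjection_unit_singleton ℝ hv]
  simp only [v, inner_add_left, inner_single_left]
  simp [hij, hij.symm, hcos, hsin]
  exact ⟨by ring, by linear_combination (2 * x j) * cos_sq_add_sin_sq (θ / 2)⟩

namespace IsUniformOnSphere

open Finset Real

variable {n : ℕ} {σ : Measure (EuclideanSpace ℝ (Fin n))}

theorem ae_sum_sq_eq_one (hσ : IsUniformOnSphere σ) : ∀ᵐ x ∂σ, ∑ i, x i ^ 2 = 1 := by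
  filter_upwards [measure_eq_zero_iff_ae_notMem.1 hσ.2.1] with x hx
  rw [Set.notMem_compl_iff, mem_sphere_zero_iff_norm, EuclideanSpace.norm_eq,
    Real.sqrt_eq_one] at hx
  simpa using hx

theorem integrable_of_continuous (hσ : IsUniformOnSphere σ)
    {f : EuclideanSpace ℝ (Fin n) → ℝ} (hf : Continuous f) : Integrable f σ := by
  have := hσ.1
  have hsphere : ∀ᵐ x ∂σ, x ∈ sphere (0 : EuclideanSpace ℝ (Fin n)) 1 :=
    measure_eq_zero_iff_ae_notMem.1 hσ.2.1 |>.mono fun _ hx => Set.notMem_compl_iff.1 hx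
  rw [← Measure.restrict_eq_self_of_ae_mem hsphere]
  exact hf.continuousOn.integrableOn_compact (isCompact_sphere 0 1)

theorem integral_comp (hσ : IsUniformOnSphere σ)
    (T : EuclideanSpace ℝ (Fin n) ≃ₗᵢ[ℝ] EuclideanSpace ℝ (Fin n))
    (f : EuclideanSpace ℝ (Fin n) → ℝ) : ∫ x, f (T x) ∂σ = ∫ x, f x ∂σ := by
  calc ∫ x, f (T x) ∂σ = ∫ x, f x ∂σ.map T :=
        (integral_map_equiv T.toHomeomorph.toMeasurableEquiv f).symm
    _ = ∫ x, f x ∂σ := by rw [hσ.2.2 T]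

theorem integral_pow_mul_pow_eq_zero_of_odd (hσ : IsUniformOnSphere σ) {i j : Fin n}
    (hij : i ≠ j) {a : ℕ} (ha : Odd a) (b : ℕ) : ∫ x, x i ^ a * x j ^ b ∂σ = 0 := by
  obtain ⟨T, hT⟩ := EuclideanSpace.exists_linearIsometryEquiv_apply_eq_cos_sin hij π
  have h := hσ.integral_comp T fun x => x i ^ a * x j ^ b
  simp only [hT, cos_pi, sin_pi, zero_mul, add_zero, sub_neg_eq_add, zero_add,
    one_mul, ha.neg_pow, neg_mul, integral_neg] at h
  linarith

theorem integral_pow_two_mul_eq_sum (hσ : IsUniformOnSphere σ) {i j : Fin n} (hij : i ≠ j)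
    {t : ℝ} (ht₀ : 0 ≤ t) (ht₁ : t ≤ 1) (N : ℕ) :
    ∫ x, x i ^ (2 * N) ∂σ = ∑ p ∈ range (N + 1), ((2 * N).choose (2 * p) : ℝ) *
      t ^ p * (1 - t) ^ (N - p) * ∫ x, x i ^ (2 * p) * x j ^ (2 * N - 2 * p) ∂σ := by
  set θ := arccos √t
  have hcos : cos θ ^ 2 = t := by
    rw [cos_arccos (by linarith [sqrt_nonneg t]) (sqrt_le_one.2 ht₁), sq_sqrt ht₀]
  obtain ⟨T, hT⟩ := EuclideanSpace.exists_linearIsometryEquiv_apply_eq_cos_sin hij θ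
  have hint : ∀ l, Integrable
      (fun x : EuclideanSpace ℝ (Fin n) => x i ^ l * x j ^ (2 * N - l)) σ :=
    fun l => hσ.integrable_of_continuous (by fun_prop)
  calc ∫ x, x i ^ (2 * N) ∂σ = ∫ x, (cos θ * x i + sin θ * x j) ^ (2 * N) ∂σ := by
        simp only [← (hT _).1]
        exact (hσ.integral_comp T fun x => x i ^ (2 * N)).symm
    _ = ∑ l ∈ range (2 * N + 1), ((2 * N).choose l : ℝ) * cos θ ^ l * sin θ ^ (2 * N - l) *
          ∫ x, x i ^ l * x j ^ (2 * N - l) ∂σ := by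
        simp_rw [← integral_const_mul]
        rw [← integral_finsetSum _ fun l _ => (hint l).const_mul _]
        refine integral_congr_ae (ae_of_all _ fun x => ?_)
        dsimp only
        rw [add_pow]
        refine sum_congr rfl fun l _ => ?_
        ring
    _ = _ := by
        rw [Finset.sum_range_two_mul_add_one_of_odd_eq_zero _ fun l hl => by
          rw [hσ.integral_pow_mul_pow_eq_zero_of_odd hij hl, mul_zero]]
        refine sum_congr rfl fun p hp => ?_
        rw [pow_mul, show 2 * N - 2 * p = 2 * (N - p) by omega, pow_mul, sin_sq, hcos]

theorem integral_pow_two_mul_succ_mul_geom_sum (hσ : IsUniformOnSphere σ) {i j : Fin n}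
    (hij : i ≠ j) (K : ℕ) {t : ℝ} (ht₀ : 0 ≤ t) (ht₁ : t < 1) :
    (∫ x, x i ^ (2 * (K + 1)) ∂σ) * ∑ k ∈ range (K + 1), t ^ k =
      ∑ p ∈ range (K + 1), ((2 * (K + 1)).choose (2 * p) : ℝ) * t ^ p * (1 - t) ^ (K - p) *
        ∫ x, x i ^ (2 * p) * x j ^ (2 * (K + 1) - 2 * p) ∂σ := by
  have hexp := hσ.integral_pow_two_mul_eq_sum hij ht₀ ht₁.le (K + 1)
  simp only [sum_range_succ _ (K + 1), Nat.choose_self, Nat.sub_self, pow_zero, Nat.cast_one,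
    one_mul, mul_one] at hexp
  have hdiv : ∑ p ∈ range (K + 1), ((2 * (K + 1)).choose (2 * p) : ℝ) * t ^ p *
      (1 - t) ^ (K + 1 - p) * ∫ x, x i ^ (2 * p) * x j ^ (2 * (K + 1) - 2 * p) ∂σ =
      (1 - t) * ∑ p ∈ range (K + 1), ((2 * (K + 1)).choose (2 * p) : ℝ) * t ^ p *
        (1 - t) ^ (K - p) * ∫ x, x i ^ (2 * p) * x j ^ (2 * (K + 1) - 2 * p) ∂σ := by
    rw [mul_sum]
    refine sum_congr rfl fun p hp => ?_
    rw [show K + 1 - p = K - p + 1 by have := mem_range.1 hp; omega, pow_succ]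
    ring
  rw [hdiv] at hexp
  refine mul_left_cancel₀ (sub_ne_zero.2 ht₁.ne') ?_
  linear_combination hexp - (∫ x, x i ^ (2 * (K + 1)) ∂σ) * geom_sum_mul t (K + 1)

theorem integral_pow_two_mul_succ_eq_mul_integral_pow_mul_sq (hσ : IsUniformOnSphere σ)
    {i j : Fin n} (hij : i ≠ j) (K : ℕ) :
    ∫ x, x i ^ (2 * (K + 1)) ∂σ = (2 * K + 1) * ∫ x, x i ^ (2 * K) * x j ^ 2 ∂σ := by
  set G : ℝ → ℝ := fun t => ∑ p ∈ range (K + 1), ((2 * (K + 1)).choose (2 * p) : ℝ) *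
    t ^ p * (1 - t) ^ (K - p) * ∫ x, x i ^ (2 * p) * x j ^ (2 * (K + 1) - 2 * p) ∂σ
  set H : ℝ → ℝ := fun t =>
    (∫ x, x i ^ (2 * (K + 1)) ∂σ) * ∑ k ∈ range (K + 1), t ^ k
  have hGH : Set.EqOn H G (Set.Ioo 0 1) := fun t ht =>
    hσ.integral_pow_two_mul_succ_mul_geom_sum hij K ht.1.le ht.2
  have h1 : H 1 = G 1 := hGH.closure (by fun_prop) (by fun_prop)
    (by rw [closure_Ioo zero_ne_one]; exact ⟨zero_le_one, le_rfl⟩)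
  have hchoose : ((2 * (K + 1)).choose (2 * K) : ℝ) = (K + 1) * (2 * K + 1) := by
    rw [Nat.choose_symm_of_eq_add (by ring : 2 * (K + 1) = 2 * K + 2), Nat.cast_choose_two]
    push_cast
    ring
  simp only [H, G, one_pow, sum_const, card_range, nsmul_eq_mul, mul_one,
    Nat.cast_add_one] at h1
  rw [sum_eq_single_of_mem K (self_mem_range_succ K) fun p hp hpK => by
    rw [sub_self, zero_pow (by have := mem_range.1 hp; omega), mul_zero, zero_mul],
    hchoose, Nat.sub_self, pow_zero, mul_one, show 2 * (K + 1) - 2 * K = 2 by omega] at h1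
  refine mul_right_cancel₀ (Nat.cast_add_one_ne_zero K) ?_
  linear_combination h1

theorem integral_pow_mul_sq_eq_of_ne (hσ : IsUniformOnSphere σ) {i j k : Fin n} (hj : j ≠ i)
    (hk : k ≠ i) (a : ℕ) : ∫ x, x i ^ a * x k ^ 2 ∂σ = ∫ x, x i ^ a * x j ^ 2 ∂σ := by
  set T := LinearIsometryEquiv.piLpCongrLeft 2 ℝ ℝ (Equiv.swap j k)
  have hT : ∀ x : EuclideanSpace ℝ (Fin n), T x i = x i ∧ T x j = x k := fun x =>
    ⟨congrArg x (Equiv.swap_apply_of_ne_of_ne hj.symm hk.symm),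
      congrArg x (Equiv.swap_apply_left j k)⟩
  simpa only [hT] using hσ.integral_comp T fun x => x i ^ a * x j ^ 2

theorem mul_integral_pow_two_mul_succ (hσ : IsUniformOnSphere σ) (hn : 1 < n) (i : Fin n)
    (K : ℕ) :
    (n + 2 * K) * ∫ x, x i ^ (2 * (K + 1)) ∂σ = (2 * K + 1) * ∫ x, x i ^ (2 * K) ∂σ := by
  have : Nontrivial (Fin n) := Fin.nontrivial_iff_two_le.2 hn
  obtain ⟨j, hj⟩ := exists_ne i
  have hsplit : ∫ x, x i ^ (2 * K) ∂σ =
      ∫ x, x i ^ (2 * (K + 1)) ∂σ + (n - 1) * ∫ x, x i ^ (2 * K) * x j ^ 2 ∂σ := by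
    calc ∫ x, x i ^ (2 * K) ∂σ = ∫ x, ∑ k, x i ^ (2 * K) * x k ^ 2 ∂σ := by
          refine integral_congr_ae ?_
          filter_upwards [hσ.ae_sum_sq_eq_one] with x hx
          rw [← mul_sum, hx, mul_one]
      _ = ∑ k, ∫ x, x i ^ (2 * K) * x k ^ 2 ∂σ :=
          integral_finsetSum _ fun k _ => hσ.integrable_of_continuous (by fun_prop)
      _ = _ := by
          rw [← add_sum_erase _ _ (mem_univ i), sum_congr rfl fun k hk =>
            hσ.integral_pow_mul_sq_eq_of_ne hj (ne_of_mem_erase hk) (2 * K)]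
          simp [← pow_add, mul_add, card_erase_of_mem, Nat.cast_sub hn.le]
  rw [hsplit, hσ.integral_pow_two_mul_succ_eq_mul_integral_pow_mul_sq hj.symm]
  ring

theorem integral_pow_two_mul_succ_le (hσ : IsUniformOnSphere σ) (hn : 1 < n) (i : Fin n)
    (k : ℕ) :
    ∫ x, x i ^ (2 * (k + 1)) ∂σ ≤ (2 * k + 1) / n * ∫ x, x i ^ (2 * k) ∂σ := by
  have hrec := hσ.mul_integral_pow_two_mul_succ hn i k
  have hnonneg : 0 ≤ ∫ x, x i ^ (2 * (k + 1)) ∂σ :=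
    integral_nonneg fun x => (even_two_mul (k + 1)).pow_nonneg _
  have hn₀ : (0 : ℝ) < n := by positivity
  rw [div_mul_eq_mul_div, le_div_iff₀ hn₀, ← hrec]
  nlinarith

theorem integral_pow_two_mul_le (hσ : IsUniformOnSphere σ) (hn : 1 < n) (i : Fin n) {k : ℕ}
    (hk : 1 ≤ k) : ∫ x, x i ^ (2 * k) ∂σ ≤ ((2 * k - 1) / n) ^ k := by
  have := hσ.1
  induction k, hk using Nat.le_induction with
  | base => norm_num; simpa using hσ.integral_pow_two_mul_succ_le hn i 0
  | succ k hk ih =>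
    have hk' : (1 : ℝ) ≤ k := by exact_mod_cast hk
    calc ∫ x, x i ^ (2 * (k + 1)) ∂σ ≤ (2 * k + 1) / n * ∫ x, x i ^ (2 * k) ∂σ :=
          hσ.integral_pow_two_mul_succ_le hn i k
      _ ≤ (2 * k + 1) / n * ((2 * k - 1) / n) ^ k := by gcongr
      _ ≤ (2 * k + 1) / n * ((2 * k + 1) / n) ^ k := by
          gcongr
          · exact div_nonneg (by linarith) n.cast_nonneg
          · linarith
      _ = ((2 * ↑(k + 1) - 1) / n) ^ (k + 1) := by push_cast; ring

theorem integral_abs_rpow_le (hσ : IsUniformOnSphere σ) (hn : 1 < n) (i : Fin n) {q : ℝ}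
    (hq : 2 ≤ q) : ∫ x, |x i| ^ q ∂σ ≤ ((q - 1) / n) ^ (q / 2) := by
  set k := ⌊q / 2⌋₊
  set u := q / 2 - k
  have hk : 1 ≤ k := Nat.le_floor (by norm_num; linarith)
  have hk' : (1 : ℝ) ≤ k := by exact_mod_cast hk
  have hu₀ : 0 ≤ u := sub_nonneg.2 (Nat.floor_le (by linarith))
  have hu₁ : u ≤ 1 := sub_le_iff_le_add'.2 (Nat.lt_floor_add_one _).le
  set m := ∫ x, x i ^ (2 * k) ∂σ
  have hm : 0 ≤ m := integral_nonneg fun x => (even_two_mul k).pow_nonneg _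
  have hsplit : ∀ x : EuclideanSpace ℝ (Fin n),
      |x i| ^ q = (x i ^ (2 * k)) ^ (1 - u) * (x i ^ (2 * (k + 1))) ^ u := fun x => by
    rw [← (even_two_mul k).pow_abs, ← (even_two_mul (k + 1)).pow_abs, ← rpow_natCast,
      ← rpow_natCast, ← rpow_mul (abs_nonneg _), ← rpow_mul (abs_nonneg _),
      ← rpow_add_of_nonneg (abs_nonneg _) (by positivity) (by positivity)]
    congr 1
    push_cast
    ring
  have hint : ∀ l : ℕ, Integrable (fun x : EuclideanSpace ℝ (Fin n) => x i ^ (2 * l)) σ :=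
    fun l => hσ.integrable_of_continuous (by fun_prop)
  have hpos : ∀ l : ℕ, 0 ≤ᵐ[σ] fun x : EuclideanSpace ℝ (Fin n) => x i ^ (2 * l) :=
    fun l => ae_of_all _ fun x => (even_two_mul l).pow_nonneg _
  calc ∫ x, |x i| ^ q ∂σ ≤ m ^ (1 - u) * (∫ x, x i ^ (2 * (k + 1)) ∂σ) ^ u := by
        simp only [hsplit]
        exact integral_rpow_mul_rpow_le (hpos k) (hpos (k + 1)) (hint k) (hint (k + 1))
          (by linarith) hu₀ (by ring)
    _ ≤ m ^ (1 - u) * ((2 * k + 1) / n * m) ^ u := by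
        gcongr
        · exact integral_nonneg fun x => (even_two_mul (k + 1)).pow_nonneg _
        · exact hσ.integral_pow_two_mul_succ_le hn i k
    _ = m * ((2 * k + 1) / n) ^ u := by
        rw [mul_rpow (by positivity) hm, mul_left_comm,
          ← rpow_add_of_nonneg hm (by linarith) hu₀, sub_add_cancel, rpow_one, mul_comm]
    _ ≤ ((2 * k - 1) / n) ^ (k : ℝ) * ((2 * k + 1) / n) ^ u := by
        rw [rpow_natCast]
        gcongr
        exact hσ.integral_pow_two_mul_le hn i hk
    _ ≤ ((1 - u) * ((2 * k - 1) / n) + u * ((2 * k + 1) / n)) ^ ((k : ℝ) + u) :=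
        rpow_mul_rpow_le_rpow_weighted_mean (div_nonneg (by linarith) n.cast_nonneg)
          (by gcongr; linarith) hk' hu₀ hu₁
    _ = ((q - 1) / n) ^ (q / 2) := by
        congr 1
        · field_simp
          ring
        · ring

theorem integral_lqNorm_sq_le (hσ : IsUniformOnSphere σ) {q : ℝ} (hq : 2 ≤ q) :
    ∫ x, lqNorm q x ^ 2 ∂σ ≤ (∫ x, ∑ i, |x i| ^ q ∂σ) ^ (2 / q) := by
  have := hσ.1
  have hq₀ : 0 ≤ q := by linarith
  have hsum : ∀ x : EuclideanSpace ℝ (Fin n), 0 ≤ ∑ i, |x i| ^ q := fun x => by positivity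
  have hsq : ∀ x : EuclideanSpace ℝ (Fin n), lqNorm q x ^ 2 = (∑ i, |x i| ^ q) ^ (2 / q) :=
    fun x => by rw [lqNorm, ← rpow_natCast, ← rpow_mul (hsum x)]; ring_nf
  have hcont : Continuous fun x : EuclideanSpace ℝ (Fin n) => ∑ i, |x i| ^ q := by
    fun_prop (disch := assumption)
  simp only [hsq]
  exact (concaveOn_rpow (by positivity) (div_le_one_of_le₀ hq (by positivity))).le_map_integral
    (continuous_rpow_const (by positivity)).continuousOn isClosed_Ici (ae_of_all _ hsum)
    (hσ.integrable_of_continuous hcont)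
    (hσ.integrable_of_continuous ((continuous_rpow_const (by positivity)).comp hcont))

end IsUniformOnSphere

open Finset in
theorem sphere_lq_norm_moment_general {n : ℕ}
    (σ : Measure (EuclideanSpace ℝ (Fin n))) (hσ : IsUniformOnSphere σ)
    (q : ℝ) (hq2 : 2 ≤ q) (hqn : q ≤ 2 * Real.log n) :
    ∫ e, lqNorm q e ^ 2 ∂σ ≤ (q - 1) * (n : ℝ) ^ (2 / q - 1) := by
  have hn : 1 < n := by
    by_contra! h
    interval_cases n <;> simp at hqn <;> linarith
  have hn₀ : (0 : ℝ) < n := by positivity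
  have hq₁ : 0 ≤ (q - 1) / n := div_nonneg (by linarith) hn₀.le
  calc ∫ e, lqNorm q e ^ 2 ∂σ ≤ (∫ e, ∑ i, |e i| ^ q ∂σ) ^ (2 / q) :=
        hσ.integral_lqNorm_sq_le hq2
    _ ≤ (n * ((q - 1) / n) ^ (q / 2)) ^ (2 / q) := by
        gcongr
        rw [integral_finsetSum _ fun i _ => hσ.integrable_of_continuous
          (by fun_prop (disch := linarith))]
        simpa using sum_le_sum fun i (_ : i ∈ univ) => hσ.integral_abs_rpow_le hn i hq2
    _ = (q - 1) * (n : ℝ) ^ (2 / q - 1) := by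
        rw [Real.mul_rpow hn₀.le (by positivity), ← Real.rpow_mul hq₁,
          show q / 2 * (2 / q) = 1 by field_simp, Real.rpow_one, Real.rpow_sub_one hn₀.ne']
        field_simp

/-- If `e` is uniform on the unit Euclidean sphere of `ℝⁿ` (`n ≥ 1`), then for every real
`q` with `2 ≤ q ≤ 2 ln n` one has `E[‖e‖_q²] ≤ (q - 1) n^{2/q - 1}`. -/
theorem sphere_lq_norm_moment {n : ℕ} (hn : 1 ≤ n)
    (σ : Measure (EuclideanSpace ℝ (Fin n))) (hσ : IsUniformOnSphere σ)
    (q : ℝ) (hq2 : 2 ≤ q) (hqn : q ≤ 2 * Real.log n) :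
    ∫ e, lqNorm q e ^ 2 ∂σ ≤ (q - 1) * (n : ℝ) ^ (2 / q - 1) :=
  sphere_lq_norm_moment_general σ hσ q hq2 hqn
end

section
/- Let 1 < p ≤ 2 and define d : ℝⁿ → ℝ by d(x) = ‖x‖_p²/(2(p − 1)), where ‖x‖_p = (Σᵢ |xᵢ|^p)^{1/p}. Then d is 1-strongly convex with respect to the ℓ_p norm: for all x, y ∈ ℝⁿ and all t ∈ [0,1], d(t·x + (1−t)·y) ≤ t·d(x) + (1−t)·d(y) − (t(1−t)/2)·‖x − y‖_p². -/
open Finset Real Filter Topology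

/-- The `ℓ_p` norm `(∑ᵢ |xᵢ|^p)^{1/p}` on `ℝⁿ` (for a real exponent `p`). -/
noncomputable def lpNorm {n : ℕ} (p : ℝ) (x : EuclideanSpace ℝ (Fin n)) : ℝ :=
  (∑ i, |x i| ^ p) ^ (1 / p)

lemma calc_ineq {p : ℝ} (hp1 : 1 < p) (hp2 : p ≤ 2) {r : ℝ} (hr0 : 0 ≤ r) (hr1 : r ≤ 1) :
    2 + p * (p - 1) * r ^ 2 ≤ (1 + r) ^ p + (1 - r) ^ p := by
  have hp0 : (0:ℝ) < p := by linarith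
  set g : ℝ → ℝ := fun r => (1 + r) ^ p + (1 - r) ^ p - p * (p - 1) * r ^ 2 - 2 with hg
  set g1 : ℝ → ℝ := fun r => p * (1 + r) ^ (p - 1) - p * (1 - r) ^ (p - 1) - 2 * p * (p - 1) * r
    with hg1
  have hcg : Continuous g := by
    apply Continuous.sub _ continuous_const
    apply Continuous.sub _ (continuous_const.mul (continuous_pow 2))
    exact ((Real.continuous_rpow_const hp0.le).comp (continuous_const.add continuous_id)).add
      ((Real.continuous_rpow_const hp0.le).comp (continuous_const.sub continuous_id))
  have hcg1 : Continuous g1 := by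
    apply Continuous.sub _ ((continuous_const.mul continuous_const).mul continuous_id)
    exact (continuous_const.mul ((Real.continuous_rpow_const (by linarith)).comp
        (continuous_const.add continuous_id))).sub
      (continuous_const.mul ((Real.continuous_rpow_const (by linarith)).comp
        (continuous_const.sub continuous_id)))
  -- derivative of g
  have hdg : ∀ r : ℝ, -1 < r → r < 1 → HasDerivAt g (g1 r) r := by
    intro r h1 h2
    have d1 : HasDerivAt (fun r : ℝ => (1 + r) ^ p) (p * (1 + r) ^ (p - 1)) r := by
      have := (Real.hasDerivAt_rpow_const (x := 1 + r) (p := p)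
        (Or.inl (by linarith))).comp r ((hasDerivAt_id r).const_add 1)
      simpa [Function.comp_def] using this
    have d2 : HasDerivAt (fun r : ℝ => (1 - r) ^ p) (-(p * (1 - r) ^ (p - 1))) r := by
      have := (Real.hasDerivAt_rpow_const (x := 1 - r) (p := p)
        (Or.inl (by linarith))).comp r ((hasDerivAt_id r).const_sub 1)
      simpa [Function.comp_def] using this
    have d3 : HasDerivAt (fun r : ℝ => p * (p - 1) * r ^ 2) (p * (p - 1) * (2 * r)) r := by
      have := (hasDerivAt_pow 2 r).const_mul (p * (p - 1))
      simpa using this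
    have := (((d1.add d2).sub d3).sub_const 2)
    refine this.congr_deriv ?_
    simp only [hg1]; ring
  -- derivative of g1
  have hdg1 : ∀ r : ℝ, 0 < r → r < 1 → HasDerivAt g1
      (p * ((p-1) * (1+r) ^ (p-2)) + p * ((p-1) * (1-r) ^ (p-2)) - 2 * p * (p-1)) r := by
    intro r h1 h2
    have d1 : HasDerivAt (fun r : ℝ => p * (1 + r) ^ (p - 1)) (p * ((p-1) * (1+r) ^ (p-2))) r := by
      have := ((Real.hasDerivAt_rpow_const (x := 1 + r) (p := p - 1)
        (Or.inl (by linarith))).comp r ((hasDerivAt_id r).const_add 1)).const_mul p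
      refine this.congr_deriv ?_
      rw [show p - 1 - 1 = p - 2 by ring]; ring
    have d2 : HasDerivAt (fun r : ℝ => p * (1 - r) ^ (p - 1))
        (-(p * ((p-1) * (1-r) ^ (p-2)))) r := by
      have := ((Real.hasDerivAt_rpow_const (x := 1 - r) (p := p - 1)
        (Or.inl (by linarith))).comp r ((hasDerivAt_id r).const_sub 1)).const_mul p
      refine this.congr_deriv ?_
      rw [show p - 1 - 1 = p - 2 by ring]; ring
    have d3 : HasDerivAt (fun r : ℝ => 2 * p * (p - 1) * r) (2 * p * (p - 1)) r := by
      simpa using (hasDerivAt_id r).const_mul (2 * p * (p - 1))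
    have := (d1.sub d2).sub d3
    refine this.congr_deriv ?_
    ring
  -- second derivative nonnegative
  have hg2 : ∀ r : ℝ, 0 < r → r < 1 →
      0 ≤ p * ((p-1) * (1+r) ^ (p-2)) + p * ((p-1) * (1-r) ^ (p-2)) - 2 * p * (p-1) := by
    intro r h1 h2
    have hA : (0:ℝ) < (1+r) ^ (p-2) := Real.rpow_pos_of_pos (by linarith) _
    have hB : (0:ℝ) < (1-r) ^ (p-2) := Real.rpow_pos_of_pos (by linarith) _
    have hab : (1:ℝ) ≤ ((1+r) * (1-r)) ^ (p-2) :=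
      Real.one_le_rpow_of_pos_of_le_one_of_nonpos (by nlinarith) (by nlinarith) (by linarith)
    rw [Real.mul_rpow (by linarith) (by linarith)] at hab
    have key : (2:ℝ) ≤ (1+r) ^ (p-2) + (1-r) ^ (p-2) := by
      nlinarith [sq_nonneg ((1+r) ^ (p-2) - (1-r) ^ (p-2)),
        sq_nonneg ((1+r) ^ (p-2) + (1-r) ^ (p-2) - 2)]
    nlinarith [mul_pos hp0 (show (0:ℝ) < p - 1 by linarith)]
  -- g1 is monotone on [0,1], g1 0 = 0
  have hmono1 : MonotoneOn g1 (Set.Icc 0 1) := by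
    apply monotoneOn_of_deriv_nonneg (convex_Icc 0 1) hcg1.continuousOn
    · intro r hr
      rw [interior_Icc] at hr
      exact (hdg1 r hr.1 hr.2).differentiableAt.differentiableWithinAt
    · intro r hr
      rw [interior_Icc] at hr
      rw [(hdg1 r hr.1 hr.2).deriv]
      exact hg2 r hr.1 hr.2
  have hg10 : g1 0 = 0 := by simp [hg1]
  have hg1nn : ∀ r ∈ Set.Icc (0:ℝ) 1, 0 ≤ g1 r := by
    intro r hr
    have := hmono1 (Set.left_mem_Icc.2 zero_le_one) hr hr.1
    rwa [hg10] at this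
  -- g is monotone on [0,1], g 0 = 0
  have hmono : MonotoneOn g (Set.Icc 0 1) := by
    apply monotoneOn_of_deriv_nonneg (convex_Icc 0 1) hcg.continuousOn
    · intro r hr
      rw [interior_Icc] at hr
      exact (hdg r (by linarith [hr.1]) hr.2).differentiableAt.differentiableWithinAt
    · intro r hr
      rw [interior_Icc] at hr
      rw [(hdg r (by linarith [hr.1]) hr.2).deriv]
      exact hg1nn r ⟨hr.1.le, hr.2.le⟩
  have hg0 : g 0 = 0 := by norm_num [hg]
  have := hmono (Set.left_mem_Icc.2 zero_le_one) (Set.mem_Icc.2 ⟨hr0, hr1⟩) hr0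
  rw [hg0] at this
  simp only [hg] at this
  linarith

lemma bcl_nonneg {p : ℝ} (hp1 : 1 < p) (hp2 : p ≤ 2) {a b : ℝ} (hb : 0 ≤ b) (hba : b ≤ a) :
    (a ^ 2 + (p - 1) * b ^ 2) ^ (p / 2) ≤ ((a + b) ^ p + (a - b) ^ p) / 2 := by
  have hp0 : (0:ℝ) < p := by linarith
  have ha : 0 ≤ a := hb.trans hba
  rcases eq_or_lt_of_le ha with rfl | hapos
  · have hb0 : b = 0 := le_antisymm hba hb
    subst hb0
    rw [show (0:ℝ)^2 + (p-1)*(0:ℝ)^2 = 0 by ring, show (0:ℝ)+0 = 0 by ring,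
      show (0:ℝ)-0 = 0 by ring, Real.zero_rpow (by positivity : p / 2 ≠ 0),
      Real.zero_rpow hp0.ne']
    norm_num
  · set r : ℝ := b / a with hrdef
    have hr0 : 0 ≤ r := by positivity
    have hr1 : r ≤ 1 := div_le_one_of_le₀ hba ha
    have hbr : b = r * a := by rw [hrdef, div_mul_cancel₀ _ hapos.ne']
    have ha2 : a ^ 2 = a ^ ((2:ℝ)) := by
      rw [← Real.rpow_natCast a 2]; norm_num
    have hap : (a ^ 2) ^ (p/2) = a ^ p := by
      rw [ha2, ← Real.rpow_mul ha, show (2:ℝ) * (p/2) = p by ring]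
    have happ : 0 ≤ a ^ p := Real.rpow_nonneg ha p
    -- LHS
    have hL : (a ^ 2 + (p - 1) * b ^ 2) ^ (p / 2)
        = a ^ p * (1 + (p - 1) * r ^ 2) ^ (p / 2) := by
      rw [hbr, show a ^ 2 + (p-1) * (r*a)^2 = a^2 * (1 + (p-1) * r^2) by ring,
        Real.mul_rpow (by positivity) (by nlinarith), hap]
    -- Bernoulli
    have hBern : (1 + (p - 1) * r ^ 2) ^ (p / 2) ≤ 1 + (p/2) * ((p-1) * r^2) :=
      rpow_one_add_le_one_add_mul_self (by nlinarith) (by linarith) (by linarith)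
    have hcalc := calc_ineq hp1 hp2 hr0 hr1
    have hR : ((a + b) ^ p + (a - b) ^ p) / 2
        = a ^ p * (((1 + r) ^ p + (1 - r) ^ p) / 2) := by
      rw [hbr, show a + r * a = a * (1 + r) by ring, show a - r * a = a * (1 - r) by ring,
        Real.mul_rpow ha (by linarith), Real.mul_rpow ha (by linarith)]
      ring
    rw [hL, hR]
    apply mul_le_mul_of_nonneg_left _ happ
    calc (1 + (p - 1) * r ^ 2) ^ (p / 2) ≤ 1 + (p/2) * ((p-1) * r^2) := hBern
      _ = (2 + p * (p-1) * r^2) / 2 := by ring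
      _ ≤ ((1 + r) ^ p + (1 - r) ^ p) / 2 := by linarith

lemma bcl_abs {p : ℝ} (hp1 : 1 < p) (hp2 : p ≤ 2) {a b : ℝ} (ha : 0 ≤ a) (hb : 0 ≤ b) :
    (a ^ 2 + (p - 1) * b ^ 2) ^ (p / 2) ≤ ((a + b) ^ p + |a - b| ^ p) / 2 := by
  rcases le_total b a with h | h
  · rw [abs_of_nonneg (by linarith)]
    exact bcl_nonneg hp1 hp2 hb h
  · rw [abs_of_nonpos (by linarith), neg_sub]
    have key := bcl_nonneg hp1 hp2 ha h
    have hmono : (a ^ 2 + (p - 1) * b ^ 2) ≤ (b ^ 2 + (p - 1) * a ^ 2) := by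
      nlinarith [mul_nonneg (show (0:ℝ) ≤ 2 - p by linarith)
        (show (0:ℝ) ≤ b^2 - a^2 by nlinarith)]
    calc (a ^ 2 + (p - 1) * b ^ 2) ^ (p / 2)
        ≤ (b ^ 2 + (p - 1) * a ^ 2) ^ (p / 2) :=
          Real.rpow_le_rpow (by nlinarith) hmono (by positivity)
      _ ≤ ((b + a) ^ p + (b - a) ^ p) / 2 := key
      _ = ((a + b) ^ p + (b - a) ^ p) / 2 := by rw [add_comm b a]

lemma bcl {p : ℝ} (hp1 : 1 < p) (hp2 : p ≤ 2) (a b : ℝ) :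
    (a ^ 2 + (p - 1) * b ^ 2) ^ (p / 2) ≤ (|a + b| ^ p + |a - b| ^ p) / 2 := by
  rcases le_total 0 a with ha | ha <;> rcases le_total 0 b with hb | hb
  · rw [abs_of_nonneg (by linarith : (0:ℝ) ≤ a + b)]
    exact bcl_abs hp1 hp2 ha hb
  · have key := bcl_abs hp1 hp2 ha (neg_nonneg.2 hb)
    rw [show a + -b = a - b by ring, show a - -b = a + b by ring, neg_sq] at key
    rw [abs_of_nonneg (by linarith : (0:ℝ) ≤ a - b)]
    linarith
  · have key := bcl_abs hp1 hp2 (neg_nonneg.2 ha) hb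
    rw [show -a + b = -(a - b) by ring, show -a - b = -(a + b) by ring, neg_sq,
      abs_neg] at key
    rw [abs_of_nonpos (by linarith : a - b ≤ 0)]
    linarith
  · have key := bcl_abs hp1 hp2 (neg_nonneg.2 ha) (neg_nonneg.2 hb)
    rw [show -a + -b = -(a + b) by ring, show -a - -b = -(a - b) by ring, neg_sq, neg_sq,
      abs_neg] at key
    rw [abs_of_nonpos (by linarith : a + b ≤ 0)]
    linarith

lemma superadd {q : ℝ} (hq0 : 0 < q) (hq1 : q ≤ 1) {n : ℕ} (f g : Fin n → ℝ)
    (hf : ∀ i, 0 ≤ f i) (hg : ∀ i, 0 ≤ g i) :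
    (∑ i, f i ^ q) ^ (1/q) + (∑ i, g i ^ q) ^ (1/q) ≤ (∑ i, (f i + g i) ^ q) ^ (1/q) := by
  have hSf : (0:ℝ) ≤ ∑ i, f i ^ q := sum_nonneg fun i _ => Real.rpow_nonneg (hf i) q
  have hSg : (0:ℝ) ≤ ∑ i, g i ^ q := sum_nonneg fun i _ => Real.rpow_nonneg (hg i) q
  set A : ℝ := (∑ i, f i ^ q) ^ (1/q) with hAdef
  set B : ℝ := (∑ i, g i ^ q) ^ (1/q) with hBdef
  have hA : 0 ≤ A := Real.rpow_nonneg hSf _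
  have hB : 0 ≤ B := Real.rpow_nonneg hSg _
  have hmonoSum : ∀ (h₁ h₂ : Fin n → ℝ), (∀ i, 0 ≤ h₁ i) → (∀ i, h₁ i ≤ h₂ i) →
      (∑ i, h₁ i ^ q) ^ (1/q) ≤ (∑ i, h₂ i ^ q) ^ (1/q) := by
    intro h₁ h₂ hn hle
    apply Real.rpow_le_rpow (sum_nonneg fun i _ => Real.rpow_nonneg (hn i) q)
      (sum_le_sum fun i _ => Real.rpow_le_rpow (hn i) (hle i) hq0.le) (by positivity)
  by_cases hA0 : A = 0
  · rw [hA0, zero_add, hBdef]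
    exact hmonoSum g _ hg fun i => by linarith [hf i]
  by_cases hB0 : B = 0
  · rw [hB0, add_zero, hAdef]
    exact hmonoSum f _ hf fun i => by linarith [hg i]
  have hApos : 0 < A := lt_of_le_of_ne hA (Ne.symm hA0)
  have hBpos : 0 < B := lt_of_le_of_ne hB (Ne.symm hB0)
  have hABpos : 0 < A + B := by linarith
  set lam : ℝ := A / (A + B) with hlamdef
  have hlpos : 0 < lam := by positivity
  have hl1 : lam < 1 := by rw [hlamdef, div_lt_one hABpos]; linarith
  have h1l : 1 - lam = B / (A + B) := by rw [hlamdef]; field_simp; ring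
  have h1lpos : 0 < 1 - lam := by linarith
  -- pointwise concavity bound
  have hpt : ∀ i, lam * (f i / lam) ^ q + (1 - lam) * (g i / (1 - lam)) ^ q
      ≤ (f i + g i) ^ q := by
    intro i
    have := (Real.concaveOn_rpow hq0.le hq1).2
      (Set.mem_Ici.2 (div_nonneg (hf i) hlpos.le))
      (Set.mem_Ici.2 (div_nonneg (hg i) h1lpos.le)) hlpos.le h1lpos.le (by ring)
    simpa [smul_eq_mul, mul_div_cancel₀ _ hlpos.ne', mul_div_cancel₀ _ h1lpos.ne'] using this
  have hsum : lam / lam ^ q * ∑ i, f i ^ q + (1 - lam) / (1 - lam) ^ q * ∑ i, g i ^ q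
      ≤ ∑ i, (f i + g i) ^ q := by
    rw [Finset.mul_sum, Finset.mul_sum, ← Finset.sum_add_distrib]
    apply sum_le_sum
    intro i _
    have e1 : lam / lam ^ q * f i ^ q = lam * (f i / lam) ^ q := by
      rw [Real.div_rpow (hf i) hlpos.le]; ring
    have e2 : (1 - lam) / (1 - lam) ^ q * g i ^ q = (1 - lam) * (g i / (1 - lam)) ^ q := by
      rw [Real.div_rpow (hg i) h1lpos.le]; ring
    rw [e1, e2]
    exact hpt i
  -- identify A^q, B^q
  have hAq : A ^ q = ∑ i, f i ^ q := by
    rw [hAdef, ← Real.rpow_mul hSf, one_div_mul_cancel hq0.ne', Real.rpow_one]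
  have hBq : B ^ q = ∑ i, g i ^ q := by
    rw [hBdef, ← Real.rpow_mul hSg, one_div_mul_cancel hq0.ne', Real.rpow_one]
  -- key computation : lam^(1-q) A^q + (1-lam)^(1-q) B^q = (A+B)^q
  have hcomp : lam / lam ^ q * A ^ q + (1 - lam) / (1 - lam) ^ q * B ^ q = (A + B) ^ q := by
    have e1 : lam / lam ^ q = lam ^ (1 - q) := by
      rw [Real.rpow_sub hlpos, Real.rpow_one]
    have e2 : (1 - lam) / (1 - lam) ^ q = (1 - lam) ^ (1 - q) := by
      rw [Real.rpow_sub h1lpos, Real.rpow_one]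
    have eA : A ^ (1-q) * A ^ q = A := by
      rw [← Real.rpow_add hApos, show 1 - q + q = 1 by ring, Real.rpow_one]
    have eB : B ^ (1-q) * B ^ q = B := by
      rw [← Real.rpow_add hBpos, show 1 - q + q = 1 by ring, Real.rpow_one]
    rw [e1, e2, h1l, hlamdef, Real.div_rpow hA hABpos.le, Real.div_rpow hB hABpos.le,
      div_mul_eq_mul_div, div_mul_eq_mul_div, eA, eB, ← add_div,
      div_eq_iff (ne_of_gt (Real.rpow_pos_of_pos hABpos (1-q))), ← Real.rpow_add hABpos,
      show q + (1 - q) = 1 by ring, Real.rpow_one]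
  -- conclude
  have hfinal : (A + B) ^ q ≤ ∑ i, (f i + g i) ^ q := by
    rw [← hcomp, hAq, hBq]; exact hsum
  calc A + B = ((A + B) ^ q) ^ (1/q) := by
        rw [← Real.rpow_mul hABpos.le, mul_one_div_cancel hq0.ne', Real.rpow_one]
    _ ≤ (∑ i, (f i + g i) ^ q) ^ (1/q) :=
        Real.rpow_le_rpow (Real.rpow_nonneg hABpos.le q) hfinal (by positivity)

lemma lpNorm_nonneg {n : ℕ} (p : ℝ) (x : EuclideanSpace ℝ (Fin n)) : 0 ≤ lpNorm p x :=
  Real.rpow_nonneg (sum_nonneg fun i _ => Real.rpow_nonneg (abs_nonneg _) p) _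

lemma sq_lpNorm {n : ℕ} {p : ℝ} (hp : 0 < p) (x : EuclideanSpace ℝ (Fin n)) :
    lpNorm p x ^ 2 = (∑ i, |x i| ^ p) ^ (2/p) := by
  have hS : (0:ℝ) ≤ ∑ i, |x i| ^ p := sum_nonneg fun i _ => Real.rpow_nonneg (abs_nonneg _) p
  rw [lpNorm, ← Real.rpow_natCast ((∑ i, |x i| ^ p) ^ (1/p)) 2, ← Real.rpow_mul hS,
    show (1/p) * ((2:ℕ):ℝ) = 2/p by push_cast; ring]

lemma lpNorm_smul {n : ℕ} {p : ℝ} (hp : 0 < p) (c : ℝ) (x : EuclideanSpace ℝ (Fin n)) :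
    lpNorm p (c • x) = |c| * lpNorm p x := by
  have hS : (0:ℝ) ≤ ∑ i, |x i| ^ p := sum_nonneg fun i _ => Real.rpow_nonneg (abs_nonneg _) p
  have h1 : ∀ i : Fin n, |(c • x) i| ^ p = |c| ^ p * |x i| ^ p := by
    intro i
    rw [PiLp.smul_apply, smul_eq_mul, abs_mul, Real.mul_rpow (abs_nonneg _) (abs_nonneg _)]
  rw [lpNorm, Finset.sum_congr rfl fun i _ => h1 i, ← Finset.mul_sum,
    Real.mul_rpow (Real.rpow_nonneg (abs_nonneg _) _) hS, ← Real.rpow_mul (abs_nonneg c),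
    mul_one_div_cancel hp.ne', Real.rpow_one, lpNorm]

lemma midpoint_ineq {p : ℝ} (hp1 : 1 < p) (hp2 : p ≤ 2) {n : ℕ}
    (u v : EuclideanSpace ℝ (Fin n)) :
    2 * lpNorm p u ^ 2 + 2 * (p - 1) * lpNorm p v ^ 2
      ≤ lpNorm p (u + v) ^ 2 + lpNorm p (u - v) ^ 2 := by
  have hp0 : (0:ℝ) < p := by linarith
  have hq0 : (0:ℝ) < p/2 := by linarith
  have hq1 : p/2 ≤ 1 := by linarith
  set Sp : ℝ := ∑ i, |(u + v) i| ^ p with hSp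
  set Sm : ℝ := ∑ i, |(u - v) i| ^ p with hSm
  have hSpnn : 0 ≤ Sp := sum_nonneg fun i _ => Real.rpow_nonneg (abs_nonneg _) p
  have hSmnn : 0 ≤ Sm := sum_nonneg fun i _ => Real.rpow_nonneg (abs_nonneg _) p
  -- step 1 : pointwise bcl, summed
  have hsum : ∑ i, ((u i) ^ 2 + (p - 1) * (v i) ^ 2) ^ (p/2) ≤ (Sp + Sm) / 2 := by
    have : ∀ i : Fin n, ((u i) ^ 2 + (p - 1) * (v i) ^ 2) ^ (p/2)
        ≤ (|(u + v) i| ^ p + |(u - v) i| ^ p) / 2 := by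
      intro i
      have := bcl hp1 hp2 (u i) (v i)
      simpa [PiLp.add_apply, PiLp.sub_apply] using this
    calc ∑ i, ((u i) ^ 2 + (p - 1) * (v i) ^ 2) ^ (p/2)
        ≤ ∑ i, (|(u + v) i| ^ p + |(u - v) i| ^ p) / 2 := sum_le_sum fun i _ => this i
      _ = (Sp + Sm) / 2 := by
          rw [hSp, hSm, ← Finset.sum_add_distrib, ← Finset.sum_div]
  -- step 2 : superadditivity
  have hsup := superadd hq0 hq1 (fun i => (u i) ^ 2) (fun i => (p - 1) * (v i) ^ 2)
    (fun i => sq_nonneg _) (fun i => mul_nonneg (by linarith) (sq_nonneg _))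
  rw [one_div_div] at hsup
  simp only at hsup
  -- identify the terms
  have e1 : ∀ w : EuclideanSpace ℝ (Fin n),
      (∑ i, ((w i) ^ 2) ^ (p/2)) ^ (2/p) = lpNorm p w ^ 2 := by
    intro w
    have h : ∀ i : Fin n, ((w i) ^ 2) ^ (p/2) = |w i| ^ p := by
      intro i
      rw [← sq_abs, ← Real.rpow_natCast |w i| 2, ← Real.rpow_mul (abs_nonneg _),
        show ((2:ℕ):ℝ) * (p/2) = p by push_cast; ring]
    rw [Finset.sum_congr rfl fun i _ => h i, sq_lpNorm hp0]
  have e2 : (∑ i, ((p - 1) * (v i) ^ 2) ^ (p/2)) ^ (2/p) = (p - 1) * lpNorm p v ^ 2 := by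
    have h : ∀ i : Fin n, ((p - 1) * (v i) ^ 2) ^ (p/2)
        = (p - 1) ^ (p/2) * ((v i) ^ 2) ^ (p/2) := fun i =>
      Real.mul_rpow (by linarith) (sq_nonneg _)
    rw [Finset.sum_congr rfl fun i _ => h i, ← Finset.mul_sum,
      Real.mul_rpow (Real.rpow_nonneg (by linarith) _)
        (sum_nonneg fun i _ => Real.rpow_nonneg (sq_nonneg _) _),
      ← Real.rpow_mul (by linarith : (0:ℝ) ≤ p - 1), div_mul_div_comm]
    rw [show p * 2 / (2 * p) = 1 by field_simp, Real.rpow_one, e1]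
  rw [e1 u, e2] at hsup
  -- step 3 : power mean
  have hpm : ((Sp + Sm) / 2) ^ (2/p) ≤ (Sp ^ (2/p) + Sm ^ (2/p)) / 2 := by
    have h2p : (1:ℝ) ≤ 2/p := by rw [le_div_iff₀ hp0]; linarith
    have := (convexOn_rpow h2p).2 (Set.mem_Ici.2 hSpnn) (Set.mem_Ici.2 hSmnn)
      (by norm_num : (0:ℝ) ≤ 1/2) (by norm_num : (0:ℝ) ≤ 1/2) (by norm_num)
    simp only [smul_eq_mul] at this
    calc ((Sp + Sm) / 2) ^ (2/p) = (1/2 * Sp + 1/2 * Sm) ^ (2/p) := by ring_nf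
      _ ≤ 1/2 * Sp ^ (2/p) + 1/2 * Sm ^ (2/p) := this
      _ = (Sp ^ (2/p) + Sm ^ (2/p)) / 2 := by ring
  -- step 4 : monotone rpow on hsum
  have hmid : (∑ i, ((u i) ^ 2 + (p - 1) * (v i) ^ 2) ^ (p/2)) ^ (2/p)
      ≤ ((Sp + Sm) / 2) ^ (2/p) :=
    Real.rpow_le_rpow (sum_nonneg fun i _ => Real.rpow_nonneg
      (add_nonneg (sq_nonneg _) (mul_nonneg (by linarith) (sq_nonneg _))) _) hsum
      (by positivity)
  have e3 : Sp ^ (2/p) = lpNorm p (u + v) ^ 2 := (sq_lpNorm hp0 _).symm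
  have e4 : Sm ^ (2/p) = lpNorm p (u - v) ^ 2 := (sq_lpNorm hp0 _).symm
  rw [e3, e4] at hpm
  linarith

/-- The prox-function `d(x) = ‖x‖_p²/(2(p-1))`, `1 < p ≤ 2`, is 1-strongly convex with
respect to the `ℓ_p` norm: for all `x, y` and `t ∈ [0,1]`,
`d(tx + (1-t)y) ≤ t d(x) + (1-t) d(y) - (t(1-t)/2)‖x - y‖_p²`. -/
theorem lp_prox_function_strongly_convex {n : ℕ} (p : ℝ) (hp1 : 1 < p) (hp2 : p ≤ 2)
    (x y : EuclideanSpace ℝ (Fin n)) (t : ℝ) (ht0 : 0 ≤ t) (ht1 : t ≤ 1) :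
    lpNorm p (t • x + (1 - t) • y) ^ 2 / (2 * (p - 1)) ≤
      t * (lpNorm p x ^ 2 / (2 * (p - 1))) + (1 - t) * (lpNorm p y ^ 2 / (2 * (p - 1))) -
        t * (1 - t) / 2 * lpNorm p (x - y) ^ 2 := by
  have hp0 : (0:ℝ) < p := by linarith
  set D : ℝ := lpNorm p (x - y) with hD
  set c : ℝ := (p - 1) * D ^ 2 with hc
  set F : ℝ → ℝ := fun s => lpNorm p (y + s • (x - y)) ^ 2 with hF
  set h : ℝ → ℝ := fun s => F s - c * s ^ 2 with hh
  -- midpoint convexity of h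
  have hmid : ∀ s t : ℝ, h ((s + t)/2) ≤ (h s + h t)/2 := by
    intro s t
    have hM := midpoint_ineq hp1 hp2 (y + ((s + t)/2) • (x - y)) (((s - t)/2) • (x - y))
    have ep : y + ((s + t)/2) • (x - y) + ((s - t)/2) • (x - y) = y + s • (x - y) := by
      module
    have em : y + ((s + t)/2) • (x - y) - ((s - t)/2) • (x - y) = y + t • (x - y) := by
      module
    have hv : lpNorm p (((s - t)/2) • (x - y)) ^ 2 = ((s - t)/2) ^ 2 * D ^ 2 := by
      rw [lpNorm_smul hp0, mul_pow, sq_abs, hD]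
    rw [ep, em, hv] at hM
    simp only [hh, hF]
    nlinarith [hM]
  -- continuity of h
  have hGc : Continuous fun s : ℝ => lpNorm p (y + s • (x - y)) := by
    have he : (fun s : ℝ => lpNorm p (y + s • (x - y)))
        = fun s : ℝ => (∑ i, |y i + s * (x i - y i)| ^ p) ^ (1/p) := by
      funext s
      rw [lpNorm]
      congr 1
    rw [he]
    apply (Real.continuous_rpow_const (by positivity)).comp
    apply continuous_finset_sum
    intro i _
    exact (Real.continuous_rpow_const hp0.le).comp
      (continuous_abs.comp (continuous_const.add (continuous_id.mul continuous_const)))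
  have hhc : Continuous h := by
    apply Continuous.sub _ (continuous_const.mul (continuous_pow 2))
    exact hGc.pow 2
  -- dyadic rationals
  have hdy : ∀ m : ℕ, ∀ k : ℕ, k ≤ 2 ^ m →
      h ((k : ℝ) / 2 ^ m) ≤ ((k : ℝ) / 2 ^ m) * h 1 + (1 - (k : ℝ) / 2 ^ m) * h 0 := by
    intro m
    induction m with
    | zero =>
      intro k hk
      interval_cases k
      · norm_num
      · norm_num
    | succ m ih =>
      intro k hk
      have h2m : (2:ℕ) ^ (m + 1) = 2 * 2 ^ m := by rw [pow_succ]; ring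
      rcases Nat.even_or_odd k with ⟨j, hj⟩ | ⟨j, hj⟩
      · subst hj
        have hj2 : j ≤ 2 ^ m := by omega
        have e : ((j + j : ℕ) : ℝ) / 2 ^ (m + 1) = (j : ℝ) / 2 ^ m := by
          push_cast [pow_succ]
          field_simp
          ring
        rw [e]
        exact ih j hj2
      · subst hj
        have hj1 : j + 1 ≤ 2 ^ m := by omega
        have ha := ih j (by omega)
        have hb := ih (j + 1) hj1
        push_cast at ha hb
        have hmidst := hmid ((j : ℝ) / 2 ^ m) (((j : ℝ) + 1) / 2 ^ m)
        have e : ((2 * j + 1 : ℕ) : ℝ) / 2 ^ (m + 1)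
            = ((j : ℝ) / 2 ^ m + ((j : ℝ) + 1) / 2 ^ m) / 2 := by
          push_cast [pow_succ]
          field_simp
          ring
        rw [e]
        have h2mpos : (0:ℝ) < 2 ^ m := by positivity
        linarith [hmidst, ha, hb]
  -- limit argument
  have key : h t ≤ t * h 1 + (1 - t) * h 0 := by
    set lam : ℕ → ℝ := fun m => (⌊t * 2 ^ m⌋₊ : ℝ) / 2 ^ m with hlam
    have hk2m : ∀ m : ℕ, ⌊t * 2 ^ m⌋₊ ≤ 2 ^ m := by
      intro m
      have h1 : t * 2 ^ m ≤ ((2 ^ m : ℕ) : ℝ) := by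
        push_cast
        nlinarith [pow_pos (show (0:ℝ) < 2 by norm_num) m]
      calc ⌊t * 2 ^ m⌋₊ ≤ ⌊((2 ^ m : ℕ) : ℝ)⌋₊ := Nat.floor_le_floor h1
        _ = 2 ^ m := Nat.floor_natCast _
    have hlam_le : ∀ m, lam m ≤ t := by
      intro m
      rw [hlam]
      simp only
      rw [div_le_iff₀ (by positivity : (0:ℝ) < 2 ^ m)]
      exact Nat.floor_le (by positivity)
    have hlam_ge : ∀ m, t - (1/2) ^ m ≤ lam m := by
      intro m
      rw [hlam]
      simp only
      have hfl := Nat.lt_floor_add_one (t * 2 ^ m)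
      have h2mpos : (0:ℝ) < 2 ^ m := by positivity
      rw [le_div_iff₀ h2mpos]
      have hone : ((1:ℝ)/2) ^ m * 2 ^ m = 1 := by
        rw [← mul_pow]; norm_num
      nlinarith [hfl, hone]
    have htend : Tendsto lam atTop (𝓝 t) := by
      apply tendsto_of_tendsto_of_tendsto_of_le_of_le _ tendsto_const_nhds hlam_ge hlam_le
      have : Tendsto (fun m : ℕ => (1/2 : ℝ) ^ m) atTop (𝓝 0) :=
        tendsto_pow_atTop_nhds_zero_of_lt_one (by norm_num) (by norm_num)
      simpa using tendsto_const_nhds.sub this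
    have hineq : ∀ m, h (lam m) ≤ lam m * h 1 + (1 - lam m) * h 0 := fun m =>
      hdy m _ (hk2m m)
    exact le_of_tendsto_of_tendsto' (hhc.continuousAt.tendsto.comp htend)
      (((htend.mul tendsto_const_nhds).add ((tendsto_const_nhds.sub htend).mul
        tendsto_const_nhds))) hineq
  -- unfold h
  have e0 : h 0 = lpNorm p y ^ 2 := by
    simp [hh, hF]
  have e1 : h 1 = lpNorm p x ^ 2 - c := by
    have : y + (1:ℝ) • (x - y) = x := by module
    simp [hh, hF, this]
  have et : h t = lpNorm p (t • x + (1 - t) • y) ^ 2 - c * t ^ 2 := by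
    have : y + t • (x - y) = t • x + (1 - t) • y := by module
    simp [hh, hF, this]
  rw [e0, e1, et] at key
  -- final algebra
  have final : lpNorm p (t • x + (1 - t) • y) ^ 2
      ≤ t * lpNorm p x ^ 2 + (1 - t) * lpNorm p y ^ 2 - c * (t * (1 - t)) := by
    nlinarith [key]
  have h2p : (0:ℝ) < 2 * (p - 1) := by linarith
  calc lpNorm p (t • x + (1 - t) • y) ^ 2 / (2 * (p - 1))
      ≤ (t * lpNorm p x ^ 2 + (1 - t) * lpNorm p y ^ 2 - c * (t * (1 - t))) / (2 * (p - 1)) := by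
        gcongr
    _ = t * (lpNorm p x ^ 2 / (2 * (p - 1))) + (1 - t) * (lpNorm p y ^ 2 / (2 * (p - 1))) -
        t * (1 - t) / 2 * lpNorm p (x - y) ^ 2 := by
        rw [hc, hD]
        field_simp [show p - 1 ≠ 0 by linarith]
end
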